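/- For integers n, m ≥ 3, the dual mutual-visibility number of the Cartesian product K_n □ K_m equals n + m − 1. -/

import Mathlib

namespace MutualVisibility

open SimpleGraph

variable {V W : Type*}

/-- `x` and `y` are `X`-visible in `G`: there is a shortest `x,y`-path all of whose
internal vertices avoid `X`. -/
def Visible (G : SimpleGraph V) (X : Set V) (x y : V) : Prop :=
  ∃ p : G.Walk x y, p.length = G.dist x y ∧ ∀ v ∈ p.support, v ≠ x → v ≠ y → v ∉ X

/-- `X` is a mutual-visibility set: any two vertices of `X` are `X`-visible. -/
def IsMutualVisSet (G : SimpleGraph V) (X : Set V) : Prop :=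
  ∀ x ∈ X, ∀ y ∈ X, Visible G X x y

/-- outer mutual-visibility set -/
def IsOuterMutualVisSet (G : SimpleGraph V) (X : Set V) : Prop :=
  IsMutualVisSet G X ∧ ∀ x ∈ X, ∀ y ∉ X, Visible G X x y

/-- dual mutual-visibility set -/
def IsDualMutualVisSet (G : SimpleGraph V) (X : Set V) : Prop :=
  IsMutualVisSet G X ∧ ∀ x ∉ X, ∀ y ∉ X, Visible G X x y

/-- total mutual-visibility set -/
def IsTotalMutualVisSet (G : SimpleGraph V) (X : Set V) : Prop :=
  ∀ x y : V, Visible G X x y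

/-- mutual-visibility number μ(G) -/
noncomputable def mu (G : SimpleGraph V) : ℕ :=
  sSup {k | ∃ X : Set V, IsMutualVisSet G X ∧ X.ncard = k}

/-- outer mutual-visibility number μ_o(G) -/
noncomputable def muOuter (G : SimpleGraph V) : ℕ :=
  sSup {k | ∃ X : Set V, IsOuterMutualVisSet G X ∧ X.ncard = k}

/-- dual mutual-visibility number μ_d(G) -/
noncomputable def muDual (G : SimpleGraph V) : ℕ :=
  sSup {k | ∃ X : Set V, IsDualMutualVisSet G X ∧ X.ncard = k}

/-- total mutual-visibility number μ_t(G) -/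
noncomputable def muTotal (G : SimpleGraph V) : ℕ :=
  sSup {k | ∃ X : Set V, IsTotalMutualVisSet G X ∧ X.ncard = k}

/-- `H` contains a subgraph copy of `F`. -/
def ContainsCopy (F : SimpleGraph W) (H : SimpleGraph V) : Prop :=
  ∃ f : W → V, Function.Injective f ∧ ∀ a b, F.Adj a b → H.Adj (f a) (f b)

/-- The Turán number ex(n; F): max number of edges of an `n`-vertex graph with no copy of `F`. -/
noncomputable def exNum (n : ℕ) (F : SimpleGraph W) : ℕ :=
  sSup {k | ∃ H : SimpleGraph (Fin n), ¬ ContainsCopy F H ∧ H.edgeSet.ncard = k}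

/-- The direct (tensor/categorical) product of graphs. -/
def directProd (G : SimpleGraph V) (H : SimpleGraph W) : SimpleGraph (V × W) where
  Adj x y := G.Adj x.1 y.1 ∧ H.Adj x.2 y.2
  symm := ⟨fun _ _ h => ⟨h.1.symm, h.2.symm⟩⟩
  loopless := ⟨fun x h => G.loopless.irrefl x.1 h.1⟩

/-- The join `G + H` of two graphs. -/
def graphJoin (G : SimpleGraph V) (H : SimpleGraph W) : SimpleGraph (V ⊕ W) where
  Adj u v := match u, v with
    | Sum.inl a, Sum.inl b => G.Adj a b
    | Sum.inr a, Sum.inr b => H.Adj a b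
    | _, _ => True
  symm := ⟨fun u v => match u, v with
    | Sum.inl _, Sum.inl _ => fun h => G.symm.symm _ _ h
    | Sum.inr _, Sum.inr _ => fun h => H.symm.symm _ _ h
    | Sum.inl _, Sum.inr _ => fun _ => trivial
    | Sum.inr _, Sum.inl _ => fun _ => trivial⟩
  loopless := ⟨fun u => match u with
    | Sum.inl a => G.loopless.irrefl a
    | Sum.inr a => H.loopless.irrefl a⟩

/-- A big-μ graph: `G = (K_1 ∪ K_t) + H` for some `t ≥ 0` and some graph `H`. -/
def IsBigMu {V : Type} (G : SimpleGraph V) : Prop :=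
  ∃ (t : ℕ) (W : Type) (H : SimpleGraph W),
    Nonempty (G ≃g graphJoin ((⊤ : SimpleGraph (Fin 1)) ⊕g (⊤ : SimpleGraph (Fin t))) H)

/-- A cograph: a graph with no induced path on four vertices. -/
def IsCograph (G : SimpleGraph V) : Prop :=
  ¬ ∃ f : Fin 4 → V, Function.Injective f ∧
      ∀ a b, (pathGraph 4).Adj a b ↔ G.Adj (f a) (f b)

/-- The Petersen graph, realized as the Kneser graph K(5,2). -/
def petersen : SimpleGraph {s : Finset (Fin 5) // s.card = 2} where
  Adj a b := Disjoint a.1 b.1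
  symm := ⟨fun _ _ h => h.symm⟩
  loopless := by
    constructor
    rintro ⟨s, hs⟩ (h : Disjoint s s)
    rw [disjoint_self, Finset.bot_eq_empty] at h
    subst h
    simp at hs

/-! In the rook's graph `K_n □ K_m`, two vertices in different rows and columns are at distance 2
and their common neighbours are the other two corners of their rectangle, so they are `X`-visible
iff one of these corners lies outside `X`. Read `X` row by row as a family of sets of columns:
visibility inside `X` forbids two rows from sharing two columns, and visibility inside the
complement forces any two rows to be nested. Hence every row except a largest one has at most one
element, so `|X| ≤ m + (n - 1)`; the union of one row and one column attains this bound. -/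

open Finset

section Visible

variable {G : SimpleGraph V} {X : Set V} {x y : V}

lemma visible_self : Visible G X x x :=
  ⟨.nil, by simp, fun v hv hvx _ => absurd (by simpa using hv) hvx⟩

lemma visible_of_adj (h : G.Adj x y) : Visible G X x y := by
  refine ⟨h.toWalk, by simp [dist_eq_one_iff_adj.mpr h], fun v hv hvx hvy => ?_⟩
  simp only [Adj.toWalk, Walk.support_cons, Walk.support_nil, List.mem_cons,
    List.not_mem_nil, or_false] at hv
  tauto

lemma visible_iff_of_dist_eq_two (hd : G.dist x y = 2) :
    Visible G X x y ↔ ∃ z ∉ X, G.Adj x z ∧ G.Adj z y := by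
  constructor
  · rintro ⟨p, hp, hpX⟩
    rw [hd] at hp
    rcases p with _ | ⟨hxz, _ | ⟨hzy, _ | ⟨_, _⟩⟩⟩ <;> simp at hp
    exact ⟨_, hpX _ (by simp) hxz.ne.symm hzy.ne, hxz, hzy⟩
  · rintro ⟨z, hzX, hxz, hzy⟩
    refine ⟨.cons hxz (.cons hzy .nil), by simp [hd], fun v hv hvx hvy => ?_⟩
    simp only [Walk.support_cons, Walk.support_nil, List.mem_cons, List.not_mem_nil,
      or_false] at hv
    grind

end Visible

abbrev rookGraph (α β : Type*) : SimpleGraph (α × β) :=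
  (⊤ : SimpleGraph α) □ (⊤ : SimpleGraph β)

section Rook

variable {α β : Type*} {X : Set (α × β)} {a c : α} {b d : β}

lemma rookGraph_dist_eq_two (hac : a ≠ c) (hbd : b ≠ d) :
    (rookGraph α β).dist (a, b) (c, d) = 2 := by
  have hedist : (rookGraph α β).edist (a, b) (c, d) = 2 :=
    edist_eq_two_iff.mpr ⟨fun h => hac (congrArg Prod.fst h), by simp [boxProd_adj, hac, hbd],
      ⟨(a, d), by simp [mem_commonNeighbors, boxProd_adj, hac.symm, hbd]⟩⟩
  simp [SimpleGraph.dist, hedist]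

lemma rookGraph_visible_iff :
    Visible (rookGraph α β) X (a, b) (c, d) ↔ a = c ∨ b = d ∨ (a, d) ∉ X ∨ (c, b) ∉ X := by
  by_cases hac : a = c
  · subst hac
    by_cases hbd : b = d
    · simp [hbd, visible_self]
    · simpa using visible_of_adj (by simp [boxProd_adj, hbd])
  by_cases hbd : b = d
  · subst hbd
    simpa using visible_of_adj (by simp [boxProd_adj, hac])
  rw [visible_iff_of_dist_eq_two (rookGraph_dist_eq_two hac hbd)]
  constructor
  · rintro ⟨⟨z₁, z₂⟩, hzX, hxz, hzy⟩
    simp only [boxProd_adj, top_adj] at hxz hzy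
    grind
  · rintro (h | h | h | h)
    · exact absurd h hac
    · exact absurd h hbd
    · exact ⟨(a, d), h, by simp [boxProd_adj, hbd], by simp [boxProd_adj, hac]⟩
    · exact ⟨(c, b), h, by simp [boxProd_adj, hac], by simp [boxProd_adj, hbd]⟩

end Rook

lemma sum_card_add_one_le_of_nested {ι β : Type*} [Fintype ι] [Nonempty ι] [Fintype β]
    [DecidableEq β] (N : ι → Finset β) (hnest : ∀ i j, N i ⊆ N j ∨ N j ⊆ N i)
    (hinter : Pairwise fun i j => #(N i ∩ N j) ≤ 1) :
    ∑ i, #(N i) + 1 ≤ Fintype.card ι + Fintype.card β := by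
  classical
  obtain ⟨i, -, hi⟩ := exists_max_image univ (fun i => #(N i)) univ_nonempty
  have hsmall : ∀ j ∈ univ.erase i, #(N j) ≤ 1 := by
    intro j hj
    have hji : #(N j ∩ N i) ≤ 1 := hinter (ne_of_mem_erase hj)
    rcases hnest j i with h | h
    · rwa [inter_eq_left.mpr h] at hji
    · rw [inter_eq_right.mpr h] at hji
      exact (hi j (mem_univ j)).trans hji
  calc ∑ j, #(N j) + 1 = #(N i) + ∑ j ∈ univ.erase i, #(N j) + 1 := by
        rw [add_sum_erase univ (fun j => #(N j)) (mem_univ i)]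
    _ ≤ Fintype.card β + #(univ.erase i) * 1 + 1 := by
        gcongr
        · exact card_le_univ _
        · exact sum_le_card_nsmul _ _ _ hsmall
    _ = Fintype.card ι + Fintype.card β := by
        rw [card_erase_of_mem (mem_univ i), card_univ, mul_one]
        have := Fintype.card_pos (α := ι)
        omega

section Rows

variable {α β : Type*} [Fintype β] {X : Set (α × β)}

open Classical in
noncomputable def row (X : Set (α × β)) (a : α) : Finset β := {b | (a, b) ∈ X}

@[simp]
lemma mem_row {a : α} {b : β} : b ∈ row X a ↔ (a, b) ∈ X := by
  simp [row]

lemma ncard_eq_sum_card_row [Fintype α] (X : Set (α × β)) : X.ncard = ∑ a, #(row X a) := by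
  classical
  rw [Set.ncard_eq_toFinset_card', ← Set.filter_mem_univ_eq_toFinset, card_filter,
    Fintype.sum_prod_type]
  simp only [row, card_filter]

lemma IsMutualVisSet.card_row_inter_le_one [DecidableEq β] (h : IsMutualVisSet (rookGraph α β) X)
    {a c : α} (hac : a ≠ c) : #(row X a ∩ row X c) ≤ 1 := by
  refine card_le_one.mpr fun b hb d hd => ?_
  simp only [mem_inter, mem_row] at hb hd
  by_contra hbd
  have := rookGraph_visible_iff.mp (h _ hb.1 _ hd.2)
  tauto

lemma row_subset_or_subset_of_visible_compl
    (h : ∀ x ∉ X, ∀ y ∉ X, Visible (rookGraph α β) X x y) (a c : α) :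
    row X a ⊆ row X c ∨ row X c ⊆ row X a := by
  by_contra! hne
  obtain ⟨⟨d, hda, hdc⟩, ⟨b, hbc, hba⟩⟩ := And.intro (not_subset.mp hne.1) (not_subset.mp hne.2)
  simp only [mem_row] at hda hdc hbc hba
  have := rookGraph_visible_iff.mp (h _ hba _ hdc)
  grind

lemma IsDualMutualVisSet.ncard_add_one_le [Fintype α] [Nonempty α]
    (h : IsDualMutualVisSet (rookGraph α β) X) :
    X.ncard + 1 ≤ Fintype.card α + Fintype.card β := by
  classical
  exact ncard_eq_sum_card_row X ▸ sum_card_add_one_le_of_nested _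
    (row_subset_or_subset_of_visible_compl h.2) fun _ _ => h.1.card_row_inter_le_one

end Rows

section Cross

variable {α β : Type*}

def cross (a : α) (b : β) : Set (α × β) := {p | p.1 = a ∨ p.2 = b}

lemma isDualMutualVisSet_cross (a₀ : α) (b₀ : β) :
    IsDualMutualVisSet (rookGraph α β) (cross a₀ b₀) := by
  constructor <;>
  · rintro ⟨a, b⟩ hab ⟨c, d⟩ hcd
    simp only [cross, Set.mem_ofPred_eq] at hab hcd
    rw [rookGraph_visible_iff]
    simp only [cross, Set.mem_ofPred_eq]
    grind

lemma ncard_cross_add_one [Fintype α] [Fintype β] (a₀ : α) (b₀ : β) :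
    (cross a₀ b₀).ncard + 1 = Fintype.card α + Fintype.card β := by
  classical
  have hrow : ∀ a ∈ univ.erase a₀, #(row (cross a₀ b₀) a) = 1 := by
    intro a ha
    rw [card_eq_one]
    exact ⟨b₀, by ext b; simp [cross, ne_of_mem_erase ha]⟩
  have hrow₀ : row (cross a₀ b₀) a₀ = univ := by
    ext b; simp [cross]
  rw [ncard_eq_sum_card_row, ← add_sum_erase univ _ (mem_univ a₀), sum_congr rfl hrow, hrow₀,
    sum_const, card_erase_of_mem (mem_univ a₀), card_univ, card_univ, smul_eq_mul, mul_one]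
  have := Fintype.card_pos_iff.mpr ⟨a₀⟩
  omega

end Cross

theorem muDual_rookGraph {α β : Type*} [Fintype α] [Fintype β] [Nonempty α] [Nonempty β] :
    muDual (rookGraph α β) = Fintype.card α + Fintype.card β - 1 := by
  obtain ⟨a⟩ := ‹Nonempty α›
  obtain ⟨b⟩ := ‹Nonempty β›
  refine IsGreatest.csSup_eq ⟨⟨cross a b, isDualMutualVisSet_cross a b, ?_⟩, ?_⟩
  · have := ncard_cross_add_one a b
    omega
  · rintro _ ⟨X, hX, rfl⟩
    have := hX.ncard_add_one_le
    omega

theorem muDual_boxProd_complete (n m : ℕ) (hn : 3 ≤ n) (hm : 3 ≤ m) :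
    muDual ((⊤ : SimpleGraph (Fin n)) □ (⊤ : SimpleGraph (Fin m))) = n + m - 1 := by
  have : NeZero n := ⟨by omega⟩
  have : NeZero m := ⟨by omega⟩
  simpa using muDual_rookGraph (α := Fin n) (β := Fin m)
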